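/- arXiv:2210.00816 — 2 statements merged into one kernel-verified Lean document; each statement's English description precedes it below -/
import Mathlib

section
/- For every natural number a ≥ 1, β(f_a − 1) = ⌊(a−1)/2⌋. -/
noncomputable def beta (x : ℕ) : ℕ :=
  sInf {k : ℕ | ∃ M : Multiset ℕ,
    (∀ i ∈ M, 2 ≤ i) ∧ (M.map Nat.fib).sum = x ∧ M.card = k}

/-!
The infimum defining `β n` is attained by the Zeckendorf (greedy) representation of `n`. It is a
lower bound because adding one Fibonacci number `fib j` to `y` lengthens the Zeckendorf
representation by at most one: compare the greedy steps of `y` and `y + fib j`, using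
`fib (g + 2) + fib (g + 2) = fib g + fib (g + 3)` when `j` is the leading index `g + 2` of `y`, and
induct on `y`. The greedy representation of `fib a - 1` is `fib (a - 1) + fib (a - 3) + ⋯`, with
`(a - 1) / 2` terms.
-/

namespace Nat

lemma greatestFib_eq_of_le_of_lt {n t : ℕ} (h₁ : fib t ≤ n) (h₂ : n < fib (t + 1)) :
    greatestFib n = t :=
  le_antisymm (Nat.lt_succ_iff.1 (greatestFib_lt.2 h₂)) (le_greatestFib.2 h₁)

lemma length_zeckendorf_of_le_of_lt {n t : ℕ} (ht : t ≠ 0) (h₁ : fib t ≤ n)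
    (h₂ : n < fib (t + 1)) :
    (zeckendorf n).length = (zeckendorf (n - fib t)).length + 1 := by
  have hn : 0 < n := (fib_pos.2 (Nat.pos_of_ne_zero ht)).trans_le h₁
  rw [zeckendorf_of_pos hn, greatestFib_eq_of_le_of_lt h₁ h₂, List.length_cons]

lemma two_le_of_mem_zeckendorf {n i : ℕ} (h : i ∈ zeckendorf n) : 2 ≤ i := by
  induction n using Nat.strong_induction_on with
  | _ n ih =>
    rcases Nat.eq_zero_or_pos n with rfl | hn
    · simp at h
    rw [zeckendorf_of_pos hn, List.mem_cons] at h
    rcases h with rfl | h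
    · exact le_greatestFib.2 (by rwa [fib_two])
    · exact ih _ (Nat.sub_lt hn (fib_pos.2 (greatestFib_pos.2 hn))) h

lemma length_zeckendorf_add_fib_le_of_lt {u t : ℕ} (ht : 2 ≤ t) (hu : u < fib t) :
    (zeckendorf (u + fib t)).length ≤ (zeckendorf u).length + 1 := by
  obtain ⟨s, rfl⟩ : ∃ s, t = s + 1 := ⟨t - 1, by omega⟩
  have h₂ : fib (s + 2) = fib s + fib (s + 1) := fib_add_two
  rcases lt_or_ge u (fib s) with hus | hus
  · rw [length_zeckendorf_of_le_of_lt (t := s + 1) (by omega) (by omega)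
      (show u + fib (s + 1) < fib (s + 2) by omega), Nat.add_sub_cancel]
  · -- The greedy step takes `fib s` from `u` and `fib (s + 2)` from `u + fib (s + 1)`,
    -- leaving the same remainder.
    have h₃ : fib (s + 3) = fib (s + 1) + fib (s + 2) := fib_add_two
    rw [length_zeckendorf_of_le_of_lt (t := s + 2) (by omega) (by omega)
        (show u + fib (s + 1) < fib (s + 3) by omega),
      length_zeckendorf_of_le_of_lt (t := s) (by omega) hus hu,
      show u + fib (s + 1) - fib (s + 2) = u - fib s by omega]
    omega

theorem length_zeckendorf_add_fib_le (y j : ℕ) :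
    (zeckendorf (y + fib j)).length ≤ (zeckendorf y).length + 1 := by
  induction y using Nat.strong_induction_on generalizing j with
  | _ y ih =>
    obtain ⟨k, hk, hfk⟩ : ∃ k, k ≠ 1 ∧ fib k = fib j := by
      rcases eq_or_ne j 1 with rfl | hj
      · exact ⟨2, by decide, rfl⟩
      · exact ⟨j, hj, rfl⟩
    rw [← hfk]
    rcases Nat.eq_zero_or_pos k with rfl | hk0
    · simp
    rcases lt_or_ge y (fib k) with hyk | hky
    · exact length_zeckendorf_add_fib_le_of_lt (by omega) hyk
    obtain ⟨g, hg⟩ : ∃ g, greatestFib y = g + 2 :=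
      ⟨greatestFib y - 2, by have := le_greatestFib.2 hky; omega⟩
    have hgy : fib (g + 2) ≤ y := le_greatestFib.1 hg.ge
    have hyg : y < fib (g + 3) := greatestFib_lt.1 (by omega)
    have hkg : k ≤ g + 2 := hg ▸ le_greatestFib.2 hky
    have h₂ : fib (g + 2) = fib g + fib (g + 1) := fib_add_two
    have h₃ : fib (g + 3) = fib (g + 1) + fib (g + 2) := fib_add_two
    set y' := y - fib (g + 2)
    have hy' : y' < y := Nat.sub_lt (by omega) (fib_pos.2 (by omega))
    have hLy : (zeckendorf y).length = (zeckendorf y').length + 1 :=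
      length_zeckendorf_of_le_of_lt (by omega) hgy hyg
    have split : ∀ i t, 2 ≤ t → y + fib k = (y' + fib i) + fib t → y' + fib i < fib t →
        (zeckendorf (y + fib k)).length ≤ (zeckendorf y).length + 1 := by
      intro i t ht hsplit hlt
      calc (zeckendorf (y + fib k)).length
          = (zeckendorf ((y' + fib i) + fib t)).length := by rw [hsplit]
        _ ≤ (zeckendorf (y' + fib i)).length + 1 := length_zeckendorf_add_fib_le_of_lt ht hlt
        _ ≤ (zeckendorf y').length + 1 + 1 := by gcongr; exact ih y' hy' i
        _ = (zeckendorf y).length + 1 := by rw [hLy]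
    rcases (show k ≤ g ∨ k = g + 1 ∨ k = g + 2 by omega) with hkg' | rfl | rfl
    · have : fib k ≤ fib g := fib_mono hkg'
      exact split k (g + 2) (by omega) (by omega) (by omega)
    · have := length_zeckendorf_add_fib_le_of_lt (u := y') (t := g + 3) (by omega) (by omega)
      rw [show y + fib (g + 1) = y' + fib (g + 3) by omega]
      omega
    · exact split g (g + 3) (by omega) (by omega) (by omega)

lemma length_zeckendorf_le_card (M : Multiset ℕ) :
    (zeckendorf (M.map fib).sum).length ≤ M.card := by
  induction M using Multiset.induction_on with
  | empty => simp
  | cons i M ih =>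
    rw [Multiset.map_cons, Multiset.sum_cons, Multiset.card_cons, add_comm]
    exact (length_zeckendorf_add_fib_le _ i).trans (by omega)

lemma length_zeckendorf_fib_sub_one : ∀ a, (zeckendorf (fib a - 1)).length = (a - 1) / 2
  | 0 | 1 | 2 => by simp
  | a + 3 => by
    have h₃ : fib (a + 3) = fib (a + 1) + fib (a + 2) := fib_add_two
    have h₁ : 0 < fib (a + 1) := fib_pos.2 (by omega)
    rw [length_zeckendorf_of_le_of_lt (t := a + 2) (by omega) (by omega)
        (show fib (a + 3) - 1 < fib (a + 3) by omega),
      show fib (a + 3) - 1 - fib (a + 2) = fib (a + 1) - 1 by omega,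
      length_zeckendorf_fib_sub_one (a + 1)]
    omega

end Nat

theorem beta_eq_length_zeckendorf (n : ℕ) : beta n = (Nat.zeckendorf n).length := by
  have hmem : (Nat.zeckendorf n).length ∈ {k : ℕ | ∃ M : Multiset ℕ,
      (∀ i ∈ M, 2 ≤ i) ∧ (M.map Nat.fib).sum = n ∧ M.card = k} :=
    ⟨Nat.zeckendorf n, fun _ hi => Nat.two_le_of_mem_zeckendorf hi, by simp, by simp⟩
  refine le_antisymm (Nat.sInf_le hmem) (le_csInf ⟨_, hmem⟩ ?_)
  rintro k ⟨M, -, rfl, rfl⟩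
  exact Nat.length_zeckendorf_le_card M

theorem beta_fib_sub_one_general (a : ℕ) :
    beta (Nat.fib a - 1) = (a - 1) / 2 := by
  rw [beta_eq_length_zeckendorf, Nat.length_zeckendorf_fib_sub_one]

theorem beta_fib_sub_one (a : ℕ) (ha : 1 ≤ a) :
    beta (Nat.fib a - 1) = (a - 1) / 2 :=
  beta_fib_sub_one_general a
end

section
/- For every natural number a, the numerical semigroup S(a) satisfies Wilf's inequality: F(S(a)) + 1 ≤ e(S(a))·n(S(a)), where n(S(a)) is the number of elements of S(a) strictly less than F(S(a)), F is the Frobenius number, and e is the embedding dimension (with S(a) = ℕ for a ∈ {0,1,2}, where the inequality holds trivially). -/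
open Pointwise

def S (a : ℕ) : AddSubmonoid ℕ :=
  AddSubmonoid.closure {m : ℕ | ∃ n : ℕ, m = Nat.fib a + Nat.fib n}

/-- The Frobenius number of `S a`, as an integer (equal to `-1` when `S a = ℕ`). -/
noncomputable def Frob (a : ℕ) : ℤ :=
  sSup {z : ℤ | ∀ m : ℕ, (m : ℤ) = z → m ∉ S a}

/-- The embedding dimension of `S a`: the cardinality of its minimal system of
generators `S* \ (S* + S*)`. -/
noncomputable def e (a : ℕ) : ℕ :=
  (((S a : Set ℕ) \ {0}) \ (((S a : Set ℕ) \ {0}) + ((S a : Set ℕ) \ {0}))).ncard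

/-- The number of elements of `S a` strictly below the Frobenius number. -/
noncomputable def nS (a : ℕ) : ℕ :=
  {s : ℕ | s ∈ S a ∧ (s : ℤ) < Frob a}.ncard

/-!
Write `m = fib a`, `r = (a - 1) / 2` and `zl` for the length of the Zeckendorf representation.
Adding one Fibonacci number raises `zl` by at most one, so Zeckendorf representations use the
fewest Fibonacci summands, and `x ∈ S a` exactly when `x = k * m + s` with `zl s ≤ k`.
Residues below `m` have `zl ≤ r`, so every `N ≥ r * m` lies in `S a`. On the other hand
`fib (p + 2) * fib (q + 2) = fib (p + q + 2) + fib p * fib q` peels one Zeckendorf summand off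
`fib p * m - 1` per step, giving `zl (fib p * m - 1) ≥ r`; padding `j * m - 1` with copies of `m`
up to `fib σ * m - 1`, where `j ≤ fib σ < 2 * j`, then gives `zl (j * m - 1) > r - j`, so
`r * m - 1 ∉ S a` and `F = r * m - 1`. The minimal generators are the `a - 1` distinct numbers
`m + fib i` with `i < a`, and `0` together with the `(r - 1) * m + s` for
`s < fib (a - 2) + fib (a - 4)` are at least `m / 2` elements below `F`, whence
`F + 1 = r * m ≤ (a - 1) * n`. For `a ≤ 2` the semigroup contains `1`, so `F = -1`.
-/

open Nat

lemma two_le_fib {a : ℕ} (ha : 3 ≤ a) : 2 ≤ fib a := fib_mono ha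

lemma two_le_mul_fib {a : ℕ} (ha : 3 ≤ a) : 2 ≤ (a - 1) / 2 * fib a :=
  Nat.mul_le_mul (by omega : 1 ≤ (a - 1) / 2) (two_le_fib ha)

lemma fib_lt_fib_of_lt {i n : ℕ} (hn : 3 ≤ n) (hi : i < n) : fib i < fib n := by
  rcases Nat.lt_or_ge i 2 with hi2 | hi2
  · have : fib i ≤ 1 := by interval_cases i <;> simp
    have := two_le_fib hn
    omega
  · exact (fib_lt_fib hi2).2 hi

lemma fib_add_two_mul_fib_add_two (m n : ℕ) :
    fib (m + 2) * fib (n + 2) = fib (m + n + 2) + fib m * fib n := by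
  have h := fib_add (m + 1) n
  rw [show m + 1 + n + 1 = m + n + 2 by ring] at h
  rw [h, fib_add_two (n := m), fib_add_two (n := n)]
  ring

lemma exists_eq_fib_add_two_add {t : ℕ} (ht : 0 < t) :
    ∃ c u, t = fib (c + 2) + u ∧ u < fib (c + 1) := by
  obtain ⟨c, hc⟩ : ∃ c, greatestFib t = c + 2 :=
    ⟨greatestFib t - 2, by have := le_greatestFib.2 (by rw [fib_two]; exact ht : fib 2 ≤ t); omega⟩
  have hle := fib_greatestFib_le t
  have hlt := lt_fib_greatestFib_add_one t
  have h3 : fib (c + 2 + 1) = fib (c + 1) + fib (c + 2) := fib_add_two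
  rw [hc] at hle hlt
  exact ⟨c, t - fib (c + 2), by omega, by omega⟩

lemma exists_fib_mem_Ico {j : ℕ} (hj : 1 ≤ j) : ∃ σ, 2 ≤ σ ∧ j ≤ fib σ ∧ fib σ < 2 * j := by
  obtain ⟨c, u, rfl, hu⟩ := exists_eq_fib_add_two_add hj
  have h2 : 0 < fib (c + 2) := fib_pos.2 (by omega)
  rcases Nat.eq_zero_or_pos u with rfl | hu0
  · exact ⟨c + 2, by omega, by omega, by omega⟩
  · have h3 : fib (c + 2 + 1) = fib (c + 1) + fib (c + 2) := fib_add_two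
    have hmono : fib (c + 1) ≤ fib (c + 2) := fib_le_fib_succ
    exact ⟨c + 2 + 1, by omega, by omega, by omega⟩

def zeckendorfLength (n : ℕ) : ℕ := (zeckendorf n).length

local notation "zl" => zeckendorfLength

@[simp] lemma zeckendorfLength_zero : zl 0 = 0 := by simp [zeckendorfLength]

lemma zeckendorfLength_of_pos {n : ℕ} (hn : 0 < n) :
    zl n = zl (n - fib (greatestFib n)) + 1 := by
  simp [zeckendorfLength, zeckendorf_of_pos hn]

lemma greatestFib_fib_add {n u : ℕ} (hu : u < fib (n + 1)) :
    greatestFib (fib (n + 2) + u) = n + 2 := by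
  refine le_antisymm ?_ (le_greatestFib.2 (Nat.le_add_right _ _))
  have h : fib (n + 2 + 1) = fib (n + 1) + fib (n + 2) := fib_add_two
  rw [← Nat.lt_add_one_iff, greatestFib_lt, h]
  omega

lemma zeckendorfLength_fib_add {n u : ℕ} (hu : u < fib (n + 1)) :
    zl (fib (n + 2) + u) = zl u + 1 := by
  rw [zeckendorfLength_of_pos (Nat.add_pos_left (fib_pos.2 (by omega)) _),
    greatestFib_fib_add hu, Nat.add_sub_cancel_left]

lemma zeckendorfLength_le_greatestFib_div_two (t : ℕ) : zl t ≤ greatestFib t / 2 := by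
  induction t using Nat.strong_induction_on with
  | _ t ih =>
    rcases Nat.eq_zero_or_pos t with rfl | ht
    · simp
    have hfib : 0 < fib (greatestFib t) := fib_pos.2 (greatestFib_pos.2 ht)
    have hdrop := greatestFib_sub_fib_greatestFib_le_greatestFib ht.ne'
    have hrec := ih _ (Nat.sub_lt ht hfib)
    have h2 : 2 ≤ greatestFib t := le_greatestFib.2 (by rw [fib_two]; exact ht)
    rw [zeckendorfLength_of_pos ht]
    omega

lemma zeckendorfLength_le_of_lt_fib {t n : ℕ} (h : t < fib n) : zl t ≤ (n - 1) / 2 := by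
  have := zeckendorfLength_le_greatestFib_div_two t
  have := greatestFib_lt.2 h
  omega

lemma zeckendorfLength_le_of_lt_fib_add_fib {b s : ℕ} (hs : s < fib (b + 3) + fib (b + 1)) :
    zl s ≤ (b + 2) / 2 := by
  rcases Nat.lt_or_ge s (fib (b + 3)) with hs3 | hs3
  · exact zeckendorfLength_le_of_lt_fib hs3
  have h3 : fib (b + 1 + 2) = fib (b + 3) := rfl
  obtain ⟨u, rfl⟩ : ∃ u, s = fib (b + 1 + 2) + u := ⟨s - fib (b + 3), by omega⟩
  have hu : u < fib (b + 1) := by omega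
  rw [zeckendorfLength_fib_add (hu.trans_le fib_le_fib_succ)]
  have := zeckendorfLength_le_of_lt_fib hu
  omega

lemma zeckendorfLength_add_fib_le (t i : ℕ) : zl (t + fib i) ≤ zl t + 1 := by
  induction t using Nat.strong_induction_on generalizing i with
  | _ t ih =>
    suffices h : ∀ n, zl (t + fib (n + 2)) ≤ zl t + 1 by
      match i with
      | 0 => simp
      | 1 => exact h 0
      | n + 2 => exact h n
    intro n
    rcases Nat.eq_zero_or_pos t with rfl | ht
    · simpa using (zeckendorfLength_fib_add (fib_pos.2 n.succ_pos)).le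
    obtain ⟨c, u, rfl, hu⟩ := exists_eq_fib_add_two_add ht
    have hfib3 : fib (c + 3) = fib (c + 1) + fib (c + 2) := fib_add_two
    have hfib4 : fib (c + 4) = fib (c + 2) + fib (c + 3) := fib_add_two
    have hpos : 0 < fib (c + 1) := fib_pos.2 c.succ_pos
    have hpos2 : 0 < fib (c + 2) := fib_pos.2 (by omega)
    rw [zeckendorfLength_fib_add hu]
    rcases lt_trichotomy n c with hn | rfl | hn
    · have hlt : fib (n + 2) < fib (c + 2) := fib_add_two_strictMono hn
      calc zl (fib (c + 2) + u + fib (n + 2)) = zl (u + fib (n + 2) + fib (c + 2)) := by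
            rw [add_comm (fib (c + 2)), add_right_comm]
        _ ≤ zl (u + fib (n + 2)) + 1 := ih _ (by omega) _
        _ ≤ zl u + 1 + 1 := by gcongr; exact ih _ (by omega) _
    · have hfc : fib (n + 2) = fib n + fib (n + 1) := fib_add_two
      calc zl (fib (n + 2) + u + fib (n + 2)) = zl (u + fib n + fib (n + 3)) := by
            congr 1; omega
        _ ≤ zl (u + fib n) + 1 := ih _ (by omega) _
        _ ≤ zl u + 1 + 1 := by gcongr; exact ih _ (by omega) _
    rcases Nat.eq_or_lt_of_le hn with rfl | hn
    · calc zl (fib (c + 2) + u + fib (c + 1 + 2)) = zl (u + fib (c + 4)) := by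
            rw [show c + 1 + 2 = c + 3 from rfl]; congr 1; omega
        _ ≤ zl u + 1 := ih _ (by omega) _
        _ ≤ zl u + 1 + 1 := by omega
    · have hle : fib (c + 3) ≤ fib (n + 1) := fib_mono (by omega)
      rw [add_comm, zeckendorfLength_fib_add (by omega), zeckendorfLength_fib_add hu]

lemma zeckendorfLength_add_sum_fib_le (t : ℕ) (l : List ℕ) :
    zl (t + (l.map fib).sum) ≤ zl t + l.length := by
  induction l generalizing t with
  | nil => simp
  | cons i l ih =>
    calc zl (t + ((i :: l).map fib).sum) = zl (t + fib i + (l.map fib).sum) := by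
          simp [add_assoc]
      _ ≤ zl (t + fib i) + l.length := ih _
      _ ≤ zl t + (i :: l).length := by
          have := zeckendorfLength_add_fib_le t i; simp only [List.length_cons]; omega

lemma zeckendorfLength_add_mul_fib_le (t k i : ℕ) : zl (t + k * fib i) ≤ zl t + k := by
  simpa using zeckendorfLength_add_sum_fib_le t (List.replicate k i)

lemma zeckendorfLength_fib_sub_one : ∀ n, (n - 1) / 2 ≤ zl (fib n - 1)
  | 0 | 1 | 2 => by simp
  | c + 3 => by
    have hpos : 0 < fib (c + 1) := fib_pos.2 (by omega)
    have hsplit : fib (c + 3) - 1 = fib (c + 2) + (fib (c + 1) - 1) := by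
      have : fib (c + 3) = fib (c + 1) + fib (c + 2) := fib_add_two
      omega
    rw [hsplit, zeckendorfLength_fib_add (by omega)]
    have := zeckendorfLength_fib_sub_one (c + 1)
    omega

lemma zeckendorfLength_fib_mul_fib_sub_one {p a : ℕ} (hp : 1 ≤ p) (ha : p + 2 ≤ a) :
    (a - 1) / 2 ≤ zl (fib p * fib a - 1) := by
  induction p using Nat.strong_induction_on generalizing a with
  | _ p ih =>
    match p, hp with
    | 1, _ | 2, _ => simpa using zeckendorfLength_fib_sub_one a
    | q + 3, _ =>
      obtain ⟨b, rfl⟩ : ∃ b, a = b + 2 := ⟨a - 2, by omega⟩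
      have hpos : 0 < fib (q + 1) * fib b :=
        Nat.mul_pos (fib_pos.2 (by omega)) (fib_pos.2 (by omega))
      have hlt : fib (q + 1) * fib b ≤ fib (q + b + 1 + 1) := by
        have := fib_add (q + 1) b
        rw [show q + 1 + b + 1 = q + b + 1 + 1 by ring] at this
        omega
      have hsplit : fib (q + 3) * fib (b + 2) - 1
          = fib (q + b + 1 + 2) + (fib (q + 1) * fib b - 1) := by
        have h := fib_add_two_mul_fib_add_two (q + 1) b
        rw [show q + 1 + b + 2 = q + b + 1 + 2 by ring] at h
        have h' : fib (q + 3) * fib (b + 2) = fib (q + b + 1 + 2) + fib (q + 1) * fib b := h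
        omega
      rw [hsplit, zeckendorfLength_fib_add (by omega)]
      have := ih (q + 1) (by omega) (a := b) (by omega) (by omega)
      omega

lemma lt_zeckendorfLength_mul_fib_sub_one_add {j a : ℕ} (hj : 1 ≤ j) (ha : 2 * j + 2 ≤ a) :
    (a - 1) / 2 < zl (j * fib a - 1) + j := by
  obtain ⟨σ, hσ2, hjσ, hσj⟩ := exists_fib_mem_Ico hj
  have hσa : σ + 2 ≤ a := by have := le_fib_add_one σ; omega
  have hpad : fib σ * fib a - 1 = j * fib a - 1 + (fib σ - j) * fib a := by
    have : j * fib a ≤ fib σ * fib a := Nat.mul_le_mul_right _ hjσ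
    have : 1 ≤ j * fib a := Nat.mul_le_mul hj (fib_pos.2 (by omega))
    rw [Nat.sub_mul]
    omega
  have hlow := zeckendorfLength_fib_mul_fib_sub_one (by omega : 1 ≤ σ) hσa
  have hup := zeckendorfLength_add_mul_fib_le (j * fib a - 1) (fib σ - j) a
  rw [← hpad] at hup
  omega

lemma mem_S_iff {a x : ℕ} :
    x ∈ S a ↔ ∃ l : List ℕ, x = l.length * fib a + (l.map fib).sum := by
  constructor
  · intro hx
    induction hx using AddSubmonoid.closure_induction with
    | mem y hy =>
      obtain ⟨n, rfl⟩ := hy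
      exact ⟨[n], by simp⟩
    | zero => exact ⟨[], by simp⟩
    | add y z _ _ hy hz =>
      obtain ⟨l₁, rfl⟩ := hy
      obtain ⟨l₂, rfl⟩ := hz
      exact ⟨l₁ ++ l₂, by simp only [List.length_append, List.map_append, List.sum_append]; ring⟩
  · rintro ⟨l, rfl⟩
    induction l with
    | nil => simp
    | cons n l ih =>
      have hgen : fib a + fib n ∈ S a := AddSubmonoid.subset_closure ⟨n, rfl⟩
      convert (S a).add_mem hgen ih using 1
      simp only [List.length_cons, List.map_cons, List.sum_cons]
      ring

lemma mem_S_iff_zeckendorfLength {a x : ℕ} :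
    x ∈ S a ↔ ∃ k s, x = k * fib a + s ∧ zl s ≤ k := by
  rw [mem_S_iff]
  constructor
  · rintro ⟨l, rfl⟩
    exact ⟨l.length, _, rfl, by simpa using zeckendorfLength_add_sum_fib_le 0 l⟩
  · rintro ⟨k, s, rfl, hs⟩
    -- pad the Zeckendorf summands of `s` with `fib 0 = 0`
    refine ⟨zeckendorf s ++ List.replicate (k - zl s) 0, ?_⟩
    have hlen : (zeckendorf s).length + (k - zl s) = k := by rw [zeckendorfLength] at hs ⊢; omega
    simp only [List.length_append, List.length_replicate, hlen, List.map_append,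
      List.map_replicate, fib_zero, List.sum_append, sum_zeckendorf_fib, List.sum_replicate,
      smul_zero, add_zero]

lemma fib_add_mem_S (a : ℕ) : ∀ d, fib (a + d) ∈ S a
  | 0 => AddSubmonoid.subset_closure ⟨0, by simp⟩
  | 1 => AddSubmonoid.subset_closure <| match a with
    | 0 => ⟨1, by simp⟩
    | b + 1 => ⟨b, by rw [fib_add_two, add_comm]⟩
  | d + 2 => by
    rw [← add_assoc, fib_add_two]
    exact (S a).add_mem (fib_add_mem_S a d) (fib_add_mem_S a (d + 1))

lemma fib_le_of_mem_S {a x : ℕ} (hx : x ∈ S a) (hx0 : x ≠ 0) : fib a ≤ x := by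
  obtain ⟨_ | ⟨n, l⟩, rfl⟩ := mem_S_iff.1 hx
  · simp at hx0
  · have := Nat.le_mul_of_pos_left (fib a) (by omega : 0 < l.length + 1)
    simp only [List.length_cons, List.map_cons, List.sum_cons]
    omega

lemma mem_S_of_mul_fib_le {a N : ℕ} (ha : 0 < a) (h : (a - 1) / 2 * fib a ≤ N) : N ∈ S a := by
  have hm : 0 < fib a := fib_pos.2 ha
  refine mem_S_iff_zeckendorfLength.2 ⟨N / fib a, N % fib a, (Nat.div_add_mod' N _).symm, ?_⟩
  calc zl (N % fib a) ≤ (a - 1) / 2 := zeckendorfLength_le_of_lt_fib (Nat.mod_lt _ hm)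
    _ ≤ N / fib a := (Nat.le_div_iff_mul_le hm).2 h

lemma mul_fib_sub_one_notMem_S {a : ℕ} (ha : 3 ≤ a) : (a - 1) / 2 * fib a - 1 ∉ S a := by
  intro hmem
  obtain ⟨k, s, hks, hs⟩ := mem_S_iff_zeckendorfLength.1 hmem
  have hrm := two_le_mul_fib ha
  have hkr : k < (a - 1) / 2 := by
    by_contra! h
    have := Nat.mul_le_mul_right (fib a) h
    omega
  obtain ⟨j, hj⟩ : ∃ j, (a - 1) / 2 = k + j := ⟨(a - 1) / 2 - k, by omega⟩
  have hs_eq : s = j * fib a - 1 := by rw [hj, add_mul] at hks; omega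
  rcases Nat.eq_zero_or_pos k with rfl | hk
  · have := zeckendorfLength_of_pos (n := s) (by omega)
    omega
  · have := lt_zeckendorfLength_mul_fib_sub_one_add (j := j) (a := a) (by omega) (by omega)
    rw [← hs_eq] at this
    omega

lemma Frob_eq_of {a : ℕ} {z : ℤ} (hz : -1 ≤ z) (hgap : ∀ m : ℕ, (m : ℤ) = z → m ∉ S a)
    (hmem : ∀ m : ℕ, z < m → m ∈ S a) : Frob a = z := by
  refine IsGreatest.csSup_eq ⟨hgap, fun w hw => ?_⟩
  by_contra! hzw
  exact hw w.toNat (Int.toNat_of_nonneg (by omega)) (hmem _ (by omega))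

lemma Frob_eq_neg_one {a : ℕ} (ha : a < 3) : Frob a = -1 := by
  have h1 : 1 ∈ S a := AddSubmonoid.subset_closure <| by
    interval_cases a; exacts [⟨1, rfl⟩, ⟨0, rfl⟩, ⟨0, rfl⟩]
  refine Frob_eq_of le_rfl (fun m hm => by omega) (fun m _ => ?_)
  simpa using (S a).nsmul_mem h1 m

lemma Frob_eq {a : ℕ} (ha : 3 ≤ a) : Frob a = ((a - 1) / 2 * fib a : ℕ) - 1 := by
  refine Frob_eq_of (by omega) (fun m hm => ?_)
    (fun m hm => mem_S_of_mul_fib_le (by omega) (by omega))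
  have hrm := two_le_mul_fib ha
  rw [show m = (a - 1) / 2 * fib a - 1 by omega]
  exact mul_fib_sub_one_notMem_S ha

lemma card_image_fib_range {a : ℕ} (ha : 3 ≤ a) : ((Finset.range a).image fib).card = a - 1 := by
  induction a, ha using Nat.le_induction with
  | base => rfl
  | succ n hn ih =>
    rw [Finset.range_add_one, Finset.image_insert, Finset.card_insert_of_notMem, ih]
    · omega
    · simp only [Finset.mem_image, Finset.mem_range, not_exists, not_and]
      exact fun i hi => (fib_lt_fib_of_lt hn hi).ne

lemma minimalGenerators_S_eq {a : ℕ} (ha : 3 ≤ a) :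
    ((S a : Set ℕ) \ {0}) \ (((S a : Set ℕ) \ {0}) + ((S a : Set ℕ) \ {0}))
      = ↑((Finset.range a).image fun i => fib a + fib i) := by
  have hm : 0 < fib a := fib_pos.2 (by omega)
  ext x
  simp only [Set.mem_sdiff, Set.mem_add, SetLike.mem_coe, Set.mem_singleton_iff,
    Finset.coe_image, Finset.coe_range, Set.mem_image, Set.mem_Iio]
  constructor
  · rintro ⟨⟨hxS, hx0⟩, hirr⟩
    obtain ⟨_ | ⟨n, l⟩, rfl⟩ := mem_S_iff.1 hxS
    · simp at hx0
    have hgen : fib a + fib n ∈ S a := AddSubmonoid.subset_closure ⟨n, rfl⟩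
    have hsplit : (n :: l).length * fib a + ((n :: l).map fib).sum
        = (fib a + fib n) + (l.length * fib a + (l.map fib).sum) := by
      simp only [List.length_cons, List.map_cons, List.sum_cons]; ring
    rw [hsplit] at hirr ⊢
    by_cases hrest : l.length * fib a + (l.map fib).sum = 0
    swap
    · exact absurd ⟨_, ⟨hgen, by omega⟩, _, ⟨mem_S_iff.2 ⟨l, rfl⟩, hrest⟩, rfl⟩ hirr
    rw [hrest, add_zero] at hirr ⊢
    refine ⟨n, ?_, rfl⟩
    by_contra! hn
    have hfn : fib n ∈ S a := by simpa [hn] using fib_add_mem_S a (n - a)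
    have hfn0 : fib n ≠ 0 := (fib_pos.2 (by omega)).ne'
    exact hirr ⟨_, ⟨fib_add_mem_S a 0, hm.ne'⟩, _, ⟨hfn, hfn0⟩, rfl⟩
  · rintro ⟨i, hi, rfl⟩
    refine ⟨⟨AddSubmonoid.subset_closure ⟨i, rfl⟩, by omega⟩, ?_⟩
    rintro ⟨y, ⟨hy, hy0⟩, z, ⟨hz, hz0⟩, hyz⟩
    have := fib_le_of_mem_S hy hy0
    have := fib_le_of_mem_S hz hz0
    have := fib_lt_fib_of_lt ha hi
    omega

lemma e_eq {a : ℕ} (ha : 3 ≤ a) : e a = a - 1 := by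
  rw [e, minimalGenerators_S_eq ha, Set.ncard_coe_finset,
    show (fun i => fib a + fib i) = (fib a + ·) ∘ fib from rfl, ← Finset.image_image,
    Finset.card_image_of_injective _ (add_right_injective _), card_image_fib_range ha]

open scoped Classical in
lemma nS_eq_card {a : ℕ} (ha : 3 ≤ a) :
    nS a = ((Finset.range ((a - 1) / 2 * fib a - 1)).filter (· ∈ S a)).card := by
  rw [nS, Frob_eq ha, ← Set.ncard_coe_finset]
  congr 1
  ext s
  simp only [Set.mem_ofPred_eq, Finset.coe_filter, Finset.mem_range]
  exact and_comm.trans (and_congr_left' (by omega))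

open scoped Classical in
lemma fib_le_two_mul_nS {a : ℕ} (ha : 5 ≤ a) : fib a ≤ 2 * nS a := by
  obtain ⟨b, rfl⟩ : ∃ b, a = b + 5 := ⟨a - 5, by omega⟩
  have h5 : fib (b + 5) = fib (b + 3) + fib (b + 4) := fib_add_two
  have h4 : fib (b + 4) = fib (b + 2) + fib (b + 3) := fib_add_two
  have h2 : fib (b + 2) = fib b + fib (b + 1) := fib_add_two
  have hb : fib b ≤ fib (b + 1) := fib_le_fib_succ
  have h3 : 2 ≤ fib (b + 3) := two_le_fib (by omega)
  set m := fib (b + 5)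
  set B := fib (b + 3) + fib (b + 1)
  -- `0`, and the elements `(r - 1) * m + s` with `r = (a - 1) / 2` and `zl s ≤ r - 1`
  let T : Finset ℕ := insert 0 ((Finset.range B).image ((b + 2) / 2 * m + ·))
  have hT : T ⊆ (Finset.range ((b + 5 - 1) / 2 * m - 1)).filter (· ∈ S (b + 5)) := by
    have hr : (b + 5 - 1) / 2 * m = (b + 2) / 2 * m + m := by
      rw [show (b + 5 - 1) / 2 = (b + 2) / 2 + 1 by omega, add_mul, one_mul]
    intro x hx
    simp only [T, Finset.mem_insert, Finset.mem_image, Finset.mem_range] at hx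
    simp only [Finset.mem_filter, Finset.mem_range, hr]
    rcases hx with rfl | ⟨s, hs, rfl⟩
    · exact ⟨by omega, (S _).zero_mem⟩
    · exact ⟨by omega, mem_S_iff_zeckendorfLength.2
        ⟨_, s, rfl, zeckendorfLength_le_of_lt_fib_add_fib hs⟩⟩
  have hcard : T.card = B + 1 := by
    rw [Finset.card_insert_of_notMem, Finset.card_image_of_injective _ (add_right_injective _),
      Finset.card_range]
    simp only [Finset.mem_image, not_exists, not_and]
    intro s _ h
    have : m ≤ (b + 2) / 2 * m := Nat.le_mul_of_pos_left m (by omega)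
    omega
  have := Finset.card_le_card hT
  rw [← nS_eq_card (by omega), hcard] at this
  omega

open scoped Classical in
lemma mul_fib_le_mul_nS {a : ℕ} (ha : 3 ≤ a) : (a - 1) / 2 * fib a ≤ (a - 1) * nS a := by
  rcases Nat.lt_or_ge a 5 with ha5 | ha5
  · have hrm := two_le_mul_fib ha
    have hn : 1 ≤ nS a := by
      rw [nS_eq_card ha]
      refine Finset.card_pos.2 ⟨0, ?_⟩
      rw [Finset.mem_filter, Finset.mem_range]
      exact ⟨by omega, (S a).zero_mem⟩
    interval_cases a
    · change 1 * 2 ≤ 2 * nS 3; omega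
    · change 1 * 3 ≤ 3 * nS 4; omega
  · calc (a - 1) / 2 * fib a ≤ (a - 1) / 2 * (2 * nS a) := by gcongr; exact fib_le_two_mul_nS ha5
      _ = 2 * ((a - 1) / 2) * nS a := by ring
      _ ≤ (a - 1) * nS a := by gcongr; omega

theorem wilf_for_S (a : ℕ) : Frob a + 1 ≤ (e a : ℤ) * (nS a : ℤ) := by
  rcases Nat.lt_or_ge a 3 with ha | ha
  · rw [Frob_eq_neg_one ha, neg_add_cancel]
    positivity
  · rw [Frob_eq ha, e_eq ha, sub_add_cancel]
    exact_mod_cast mul_fib_le_mul_nS ha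
end
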